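/- Let s ↦ (x,y,t,θ,v,a,p_x,p_y,p_t,p_θ,p_v,p_a)(s) be a differentiable solution of the 2D Hamiltonian geodesic system (H2) with v(0) = a(0) = 0 and p_t(0) > 0, and set ψ(s) = v(s)·(cosθ(s)·p_x + sinθ(s)·p_y) + a(s)·p_v(s) + p_t. If S > 0 is such that p_θ(s)² + p_a(s)² < p_t² + p_θ(0)² + p_a(0)² for all s ∈ [0,S], then ψ(s) = √(p_t² + p_θ(0)² + p_a(0)² − p_θ(s)² − p_a(s)²) > 0 for all s ∈ [0,S]. -/

import Mathlib

/-!
Along (H2) the quantity `ψ² + p_θ² + p_a²` is a first integral, and at `s = 0` it equals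
`p_t²` because `ψ(0) = p_t`. The bound on `p_θ² + p_a²` therefore keeps `ψ` away from `0`
on `[0, S]`, so by continuity `ψ` keeps the sign of `ψ(0) = p_t > 0` and is the positive
square root.
-/

open Real Set

/-- The vector `(f, g, h)` moves by an infinitesimal rotation, so its length is conserved. -/
theorem sq_add_sq_add_sq_eq_of_hasDerivAt {f g h A B : ℝ → ℝ}
    (hf : ∀ s, HasDerivAt f (A s * g s + B s * h s) s)
    (hg : ∀ s, HasDerivAt g (-A s * f s) s) (hh : ∀ s, HasDerivAt h (-B s * f s) s)
    (s r : ℝ) : f s ^ 2 + g s ^ 2 + h s ^ 2 = f r ^ 2 + g r ^ 2 + h r ^ 2 := by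
  have hF : ∀ u, HasDerivAt (fun u => f u ^ 2 + g u ^ 2 + h u ^ 2) 0 u := fun u =>
    ((((hf u).pow 2).add ((hg u).pow 2)).add ((hh u).pow 2)).congr_deriv (by push_cast; ring)
  exact is_const_of_deriv_eq_zero (fun u => (hF u).differentiableAt) (fun u => (hF u).deriv) s r

theorem pos_of_continuousOn_Icc_of_ne_zero {f : ℝ → ℝ} {a b : ℝ} (hab : a ≤ b)
    (hf : ContinuousOn f (Icc a b)) (ha : 0 < f a) (hne : ∀ u ∈ Icc a b, f u ≠ 0) :
    0 < f b := by
  by_contra! hb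
  obtain ⟨c, hc, hc0⟩ := intermediate_value_Icc' hab hf ⟨hb, ha.le⟩
  exact hne c hc hc0

theorem hasDerivAt_psi {θ v a px py pt pθ pv pa ψ : ℝ → ℝ}
    (hψ : ∀ s, ψ s = v s * (cos (θ s) * px s + sin (θ s) * py s) + a s * pv s + pt s)
    (hpx : ∀ s, HasDerivAt px 0 s) (hpy : ∀ s, HasDerivAt py 0 s)
    (hpt : ∀ s, HasDerivAt pt 0 s)
    (hpv : ∀ s, HasDerivAt pv (-(cos (θ s) * px s + sin (θ s) * py s) * ψ s) s)
    (hv : ∀ s, HasDerivAt v (a s * ψ s) s) (hθ : ∀ s, HasDerivAt θ (pθ s) s)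
    (ha : ∀ s, HasDerivAt a (pa s) s) (s : ℝ) :
    HasDerivAt ψ (v s * (cos (θ s) * py s - sin (θ s) * px s) * pθ s + pv s * pa s) s := by
  rw [funext hψ]
  have hK : HasDerivAt (fun s => cos (θ s) * px s + sin (θ s) * py s) _ s :=
    ((hθ s).cos.mul (hpx s)).add ((hθ s).sin.mul (hpy s))
  exact ((((hv s).mul hK).add ((ha s).mul (hpv s))).add (hpt s)).congr_deriv (by
    rw [hψ s]; ring)

theorem stmt_14_general
    (θ v a px py pt pθ pv pa : ℝ → ℝ)
    (ψ : ℝ → ℝ)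
    (hψ : ∀ s, ψ s = v s * (Real.cos (θ s) * px s + Real.sin (θ s) * py s)
        + a s * pv s + pt s)
    (hpx : ∀ s, HasDerivAt px 0 s)
    (hpy : ∀ s, HasDerivAt py 0 s)
    (hpt : ∀ s, HasDerivAt pt 0 s)
    (hpv : ∀ s, HasDerivAt pv
      (-(Real.cos (θ s) * px s + Real.sin (θ s) * py s) * ψ s) s)
    (hpθ : ∀ s, HasDerivAt pθ
      (v s * (Real.sin (θ s) * px s - Real.cos (θ s) * py s) * ψ s) s)
    (hpa : ∀ s, HasDerivAt pa (-(pv s) * ψ s) s)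
    (hv : ∀ s, HasDerivAt v (a s * ψ s) s)
    (hθ : ∀ s, HasDerivAt θ (pθ s) s)
    (ha : ∀ s, HasDerivAt a (pa s) s)
    (hv0 : v 0 = 0) (ha0 : a 0 = 0) (hpt0 : 0 < pt 0)
    (S : ℝ)
    (hbound : ∀ s ∈ Set.Icc (0 : ℝ) S,
      pθ s ^ 2 + pa s ^ 2 < pt 0 ^ 2 + pθ 0 ^ 2 + pa 0 ^ 2) :
    ∀ s ∈ Set.Icc (0 : ℝ) S,
      ψ s = Real.sqrt (pt 0 ^ 2 + pθ 0 ^ 2 + pa 0 ^ 2 - pθ s ^ 2 - pa s ^ 2) ∧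
      0 < ψ s := by
  intro s hs
  have hψ' := hasDerivAt_psi hψ hpx hpy hpt hpv hv hθ ha
  have hψ0 : ψ 0 = pt 0 := by rw [hψ 0, hv0, ha0]; ring
  have hcons (r : ℝ) : ψ r ^ 2 + pθ r ^ 2 + pa r ^ 2 = pt 0 ^ 2 + pθ 0 ^ 2 + pa 0 ^ 2 :=
    hψ0 ▸ sq_add_sq_add_sq_eq_of_hasDerivAt hψ'
      (fun u => (hpθ u).congr_deriv (by ring)) hpa r 0
  have hne : ∀ r ∈ Icc 0 s, ψ r ≠ 0 := fun r hr h0 => by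
    have := hbound r ⟨hr.1, hr.2.trans hs.2⟩
    nlinarith [hcons r]
  have hpos : 0 < ψ s := pos_of_continuousOn_Icc_of_ne_zero hs.1
    (fun u _ => (hψ' u).continuousAt.continuousWithinAt) (hψ0 ▸ hpt0) hne
  refine ⟨?_, hpos⟩
  rw [← hcons s, show ψ s ^ 2 + pθ s ^ 2 + pa s ^ 2 - pθ s ^ 2 - pa s ^ 2 = ψ s ^ 2 by ring,
    sqrt_sq hpos.le]

/-- For a solution of the 2D Hamiltonian geodesic system (H2) with
`v(0) = a(0) = 0` and `p_t(0) > 0`, as long as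
`p_θ(s)² + p_a(s)² < p_t² + p_θ(0)² + p_a(0)²` on `[0, S]`, the factor
`ψ = v(cosθ·p_x + sinθ·p_y) + a·p_v + p_t` satisfies
`ψ(s) = √(p_t² + p_θ(0)² + p_a(0)² − p_θ(s)² − p_a(s)²) > 0`. -/
theorem stmt_14
    (x y t θ v a px py pt pθ pv pa : ℝ → ℝ)
    (ψ : ℝ → ℝ)
    (hψ : ∀ s, ψ s = v s * (Real.cos (θ s) * px s + Real.sin (θ s) * py s)
        + a s * pv s + pt s)
    (hpx : ∀ s, HasDerivAt px 0 s)
    (hpy : ∀ s, HasDerivAt py 0 s)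
    (hpt : ∀ s, HasDerivAt pt 0 s)
    (hpv : ∀ s, HasDerivAt pv
      (-(Real.cos (θ s) * px s + Real.sin (θ s) * py s) * ψ s) s)
    (hpθ : ∀ s, HasDerivAt pθ
      (v s * (Real.sin (θ s) * px s - Real.cos (θ s) * py s) * ψ s) s)
    (hpa : ∀ s, HasDerivAt pa (-(pv s) * ψ s) s)
    (hx : ∀ s, HasDerivAt x (v s * Real.cos (θ s) * ψ s) s)
    (hy : ∀ s, HasDerivAt y (v s * Real.sin (θ s) * ψ s) s)
    (ht : ∀ s, HasDerivAt t (ψ s) s)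
    (hv : ∀ s, HasDerivAt v (a s * ψ s) s)
    (hθ : ∀ s, HasDerivAt θ (pθ s) s)
    (ha : ∀ s, HasDerivAt a (pa s) s)
    (hv0 : v 0 = 0) (ha0 : a 0 = 0) (hpt0 : 0 < pt 0)
    (S : ℝ) (hS : 0 < S)
    (hbound : ∀ s ∈ Set.Icc (0 : ℝ) S,
      pθ s ^ 2 + pa s ^ 2 < pt 0 ^ 2 + pθ 0 ^ 2 + pa 0 ^ 2) :
    ∀ s ∈ Set.Icc (0 : ℝ) S,
      ψ s = Real.sqrt (pt 0 ^ 2 + pθ 0 ^ 2 + pa 0 ^ 2 - pθ s ^ 2 - pa s ^ 2) ∧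
      0 < ψ s :=
  stmt_14_general θ v a px py pt pθ pv pa ψ hψ hpx hpy hpt hpv hpθ hpa hv hθ ha hv0 ha0 hpt0 S
    hbound
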